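/- For real x, y, p > 0 and λ, μ > 0 with λμ = xy, R_J(x+λ, y+λ, λ, p+λ) + R_J(x+μ, y+μ, μ, p+μ) = R_J(x, y, 0, p) − 3 R_C(a, b), where a = p²(λ + μ + x + y) and b = p(p+λ)(p+μ) (so that b − a = p(p−x)(p−y)). -/

import Mathlib

/-! Shifting the variable of integration gives `R_J(x+a, y+a, a, p+a) = (3/2) ∫_a^∞ G`, where `G` is
the integrand of `R_J(x, y, 0, p)`, so the identity says `(3/2) (∫_l^∞ G - ∫_0^m G) = -3 R_C(a, b)`.
Let `m ≤ l`. The inversion `t = xy/v` maps `(l, ∞)` onto `(0, m)` and turns `∫_0^m G` into an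
integral over `(l, ∞)`. The difference of the two integrands over `(l, ∞)` becomes, under
`w = v + xy/v` (increasing there because `xy = lm ≤ l²`), the integrand of
`R_C(w + x + y, w + p + xy/p) / p` over `(l + m, ∞)`; homogeneity
`R_C(k a, k b) = R_C(a, b) / √k` with `k = p²` and a shift identify this with `R_C(a, b)`. -/

open MeasureTheory Real

noncomputable def RC (x y : ℝ) : ℝ :=
  (1/2) * ∫ t in Set.Ioi (0:ℝ), (Real.sqrt (t + x))⁻¹ * (t + y)⁻¹

noncomputable def RF (x y z : ℝ) : ℝ :=
  (1/2) * ∫ t in Set.Ioi (0:ℝ), (Real.sqrt ((t + x) * (t + y) * (t + z)))⁻¹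

noncomputable def RD (x y z : ℝ) : ℝ :=
  (3/2) * ∫ t in Set.Ioi (0:ℝ),
    (Real.sqrt ((t + x) * (t + y)))⁻¹ * ((t + z) * Real.sqrt (t + z))⁻¹

noncomputable def RJ (x y z p : ℝ) : ℝ :=
  (3/2) * ∫ t in Set.Ioi (0:ℝ),
    (Real.sqrt ((t + x) * (t + y) * (t + z)))⁻¹ * (t + p)⁻¹

noncomputable def RG (x y z : ℝ) : ℝ :=
  (1/4) * ∫ t in Set.Ioi (0:ℝ),
    (Real.sqrt ((t + x) * (t + y) * (t + z)))⁻¹ *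
      (x / (t + x) + y / (t + y) + z / (t + z)) * t

open Set Filter

noncomputable def rjIntegrand (x y z p t : ℝ) : ℝ := (√((t + x) * (t + y) * (t + z)))⁻¹ * (t + p)⁻¹

noncomputable def rcIntegrand (x y t : ℝ) : ℝ := (√(t + x))⁻¹ * (t + y)⁻¹

variable {E : Type*} [NormedAddCommGroup E] [NormedSpace ℝ E]

theorem setIntegral_Ioi_comp_add_right (f : ℝ → E) (a : ℝ) :
    ∫ t in Ioi 0, f (t + a) = ∫ t in Ioi a, f t := by
  have := (measurePreserving_add_right volume a).setIntegral_preimage_emb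
    (measurableEmbedding_addRight a) f (Ioi a)
  simpa [preimage_add_const_Ioi] using this

theorem RJ_add (x y z p a : ℝ) :
    RJ (x + a) (y + a) (z + a) (p + a) = 3 / 2 * ∫ t in Ioi a, rjIntegrand x y z p t := by
  rw [RJ, ← setIntegral_Ioi_comp_add_right _ a]
  simp only [rjIntegrand, add_assoc, add_comm a]

theorem RC_add (x y a : ℝ) : RC (x + a) (y + a) = 1 / 2 * ∫ t in Ioi a, rcIntegrand x y t := by
  rw [RC, ← setIntegral_Ioi_comp_add_right _ a]
  simp only [rcIntegrand, add_assoc, add_comm a]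

theorem RC_mul {k : ℝ} (hk : 0 < k) (x y : ℝ) : RC (k * x) (k * y) = RC x y / √k := by
  have hs : √k ≠ 0 := (sqrt_pos.2 hk).ne'
  have key : ∀ u, (√(k * u + k * x))⁻¹ * (k * u + k * y)⁻¹ =
      k⁻¹ * (√k)⁻¹ * ((√(u + x))⁻¹ * (u + y)⁻¹) := fun u => by
    rw [← mul_add, ← mul_add, sqrt_mul hk.le]; field_simp
  have := integral_comp_mul_left_Ioi' (fun t => (√(t + k * x))⁻¹ * (t + k * y)⁻¹) 0 hk
  rw [mul_zero] at this
  rw [RC, RC, ← this]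
  simp only [key, integral_const_mul, smul_eq_mul]
  field_simp

theorem integrableOn_inv_sqrt_Ioc : IntegrableOn (fun t : ℝ => (√t)⁻¹) (Ioc 0 1) := by
  rw [integrableOn_Ioc_iff_integrableOn_Ioo]
  refine ((intervalIntegral.integrableOn_Ioo_rpow_iff zero_lt_one).2
    (by norm_num : (-1 : ℝ) < -(1 / 2))).congr_fun (fun t ht => ?_) measurableSet_Ioo
  dsimp only
  rw [rpow_neg ht.1.le, sqrt_eq_rpow]

theorem integrableOn_inv_sqrt_pow_three_Ioi {c : ℝ} (hc : 0 < c) :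
    IntegrableOn (fun t : ℝ => (√(t ^ 3))⁻¹) (Ioi c) := by
  refine (integrableOn_Ioi_rpow_of_lt (by norm_num : -(3 / 2 : ℝ) < -1) hc).congr_fun
    (fun t ht => ?_) measurableSet_Ioi
  have ht0 : 0 ≤ t := hc.le.trans (le_of_lt ht)
  dsimp only
  rw [rpow_neg ht0, sqrt_eq_rpow, ← rpow_natCast, ← rpow_mul ht0]
  norm_num

theorem norm_rjIntegrand_le {x y z p t B : ℝ} (ht : 0 < t) (hp : 0 < p) (hB : 0 < B)
    (hB_le : B ≤ (t + x) * (t + y) * (t + z)) : ‖rjIntegrand x y z p t‖ ≤ p⁻¹ * (√B)⁻¹ := by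
  have hpos : 0 < √((t + x) * (t + y) * (t + z)) := sqrt_pos.2 (hB.trans_le hB_le)
  rw [rjIntegrand, norm_of_nonneg (by positivity), mul_comm]
  gcongr
  linarith

theorem integrableOn_rjIntegrand {x y z p : ℝ} (hx : 0 < x) (hy : 0 < y) (hz : 0 ≤ z)
    (hp : 0 < p) : IntegrableOn (rjIntegrand x y z p) (Ioi 0) := by
  have hmeas : AEStronglyMeasurable (rjIntegrand x y z p) := by
    unfold rjIntegrand; fun_prop
  rw [← Ioc_union_Ioi_eq_Ioi zero_le_one]
  refine IntegrableOn.union ?_ ?_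
  · refine Integrable.mono' (integrableOn_inv_sqrt_Ioc.const_mul (p⁻¹ * (√(x * y))⁻¹))
      hmeas.restrict ((ae_restrict_iff' measurableSet_Ioc).2 (.of_forall fun t ht => ?_))
    have ht0 : 0 < t := ht.1
    calc ‖rjIntegrand x y z p t‖ ≤ p⁻¹ * (√(x * y * t))⁻¹ :=
          norm_rjIntegrand_le ht0 hp (by positivity) (by gcongr <;> linarith)
      _ = p⁻¹ * (√(x * y))⁻¹ * (√t)⁻¹ := by rw [sqrt_mul (by positivity), mul_inv, mul_assoc]
  · refine Integrable.mono' ((integrableOn_inv_sqrt_pow_three_Ioi one_pos).const_mul p⁻¹)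
      hmeas.restrict ((ae_restrict_iff' measurableSet_Ioi).2 (.of_forall fun t ht => ?_))
    have ht0 : 0 < t := one_pos.trans ht
    exact norm_rjIntegrand_le ht0 hp (by positivity) (by
      rw [pow_three, ← mul_assoc]; gcongr <;> linarith)

theorem hasDerivAt_const_div (c : ℝ) {v : ℝ} (hv : v ≠ 0) :
    HasDerivAt (fun v => c / v) (-c / v ^ 2) v := by
  simpa [div_eq_mul_inv, neg_div] using (hasDerivAt_inv hv).const_mul c

theorem image_const_div_Ioi {c l : ℝ} (hc : 0 < c) (hl : 0 < l) :
    (fun v => c / v) '' Ioi l = Ioo 0 (c / l) := by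
  ext t
  constructor
  · rintro ⟨v, hv, rfl⟩
    have hv0 : 0 < v := hl.trans hv
    exact ⟨by positivity, div_lt_div_of_pos_left hc hl hv⟩
  · rintro ⟨ht0, htl⟩
    refine ⟨c / t, ?_, div_div_cancel₀ hc.ne'⟩
    rwa [mem_Ioi, lt_div_iff₀ ht0, ← lt_div_iff₀' hl]

theorem injOn_const_div {c : ℝ} (hc : c ≠ 0) : InjOn (fun v => c / v) (Ioi 0) :=
  fun v hv w hw h => by
    rw [div_eq_div_iff (ne_of_gt hv) (ne_of_gt (show 0 < w from hw)), mul_right_inj' hc] at h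
    exact h.symm

theorem integrableOn_Ioo_zero_iff_integrableOn_Ioi_div {c l : ℝ} (hc : 0 < c) (hl : 0 < l)
    (g : ℝ → E) :
    IntegrableOn g (Ioo 0 (c / l)) ↔ IntegrableOn (fun v => (c / v ^ 2) • g (c / v)) (Ioi l) := by
  rw [← image_const_div_Ioi hc hl, integrableOn_image_iff_integrableOn_abs_deriv_smul
    measurableSet_Ioi (fun v hv => (hasDerivAt_const_div c (hl.trans hv).ne').hasDerivWithinAt)
    ((injOn_const_div hc.ne').mono (Ioi_subset_Ioi hl.le))]
  refine integrableOn_congr_fun (fun v _ => ?_) measurableSet_Ioi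
  simp [abs_div, abs_of_pos hc]

theorem integral_Ioo_zero_eq_integral_Ioi_div {c l : ℝ} (hc : 0 < c) (hl : 0 < l)
    (g : ℝ → E) : ∫ t in Ioo 0 (c / l), g t = ∫ v in Ioi l, (c / v ^ 2) • g (c / v) := by
  rw [← image_const_div_Ioi hc hl, integral_image_eq_integral_abs_deriv_smul
    measurableSet_Ioi (fun v hv => (hasDerivAt_const_div c (hl.trans hv).ne').hasDerivWithinAt)
    ((injOn_const_div hc.ne').mono (Ioi_subset_Ioi hl.le))]
  refine setIntegral_congr_fun measurableSet_Ioi (fun v _ => ?_)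
  simp [abs_div, abs_of_pos hc]

theorem hasDerivAt_add_const_div (c : ℝ) {v : ℝ} (hv : v ≠ 0) :
    HasDerivAt (fun v => v + c / v) (1 - c / v ^ 2) v := by
  simpa [neg_div, ← sub_eq_add_neg] using (hasDerivAt_id' v).fun_add (hasDerivAt_const_div c hv)

theorem continuousOn_add_const_div {c l : ℝ} (hl : 0 < l) :
    ContinuousOn (fun v => v + c / v) (Ici l) := fun _ hv =>
  (hasDerivAt_add_const_div c (hl.trans_le hv).ne').continuousAt.continuousWithinAt

theorem one_sub_div_sq_pos {c l v : ℝ} (hl : 0 < l) (hc : c ≤ l ^ 2) (hv : l < v) :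
    0 < 1 - c / v ^ 2 := by
  rw [sub_pos, div_lt_one (by nlinarith)]
  nlinarith

theorem strictMonoOn_add_const_div {c l : ℝ} (hl : 0 < l) (hc : c ≤ l ^ 2) :
    StrictMonoOn (fun v => v + c / v) (Ici l) := by
  refine strictMonoOn_of_deriv_pos (convex_Ici l) (continuousOn_add_const_div hl) fun v hv => ?_
  rw [interior_Ici] at hv
  rw [(hasDerivAt_add_const_div c (hl.trans hv).ne').deriv]
  exact one_sub_div_sq_pos hl hc hv

theorem integral_Ioi_add_const_div {c l : ℝ} (hl : 0 < l) (hc : c ≤ l ^ 2) (g : ℝ → E) :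
    ∫ w in Ioi (l + c / l), g w = ∫ v in Ioi l, (1 - c / v ^ 2) • g (v + c / v) := by
  have hmono := strictMonoOn_add_const_div hl hc
  have htop : Tendsto (fun v => v + c / v) atTop atTop :=
    tendsto_id.atTop_add (tendsto_const_nhds.div_atTop tendsto_id)
  rw [← (continuousOn_add_const_div hl).image_Ioi_of_strictMonoOn hmono htop,
    integral_image_eq_integral_abs_deriv_smul measurableSet_Ioi
      (fun v hv => (hasDerivAt_add_const_div c (hl.trans hv).ne').hasDerivWithinAt)
      (hmono.injOn.mono Ioi_subset_Ici_self)]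
  refine setIntegral_congr_fun measurableSet_Ioi fun v hv => ?_
  rw [abs_of_pos (one_sub_div_sq_pos hl hc hv)]

theorem div_sq_mul_rjIntegrand_div_sub {x y p v : ℝ} (hx : 0 < x) (hy : 0 < y) (hp : 0 < p)
    (hv : 0 < v) :
    x * y / v ^ 2 * rjIntegrand x y 0 p (x * y / v) - rjIntegrand x y 0 p v =
      (1 - x * y / v ^ 2) * rcIntegrand (x + y) (p + x * y / p) (v + x * y / v) / p := by
  have h_inv : √((x * y / v + x) * (x * y / v + y) * (x * y / v + 0)) =
      x * y / v ^ 2 * √((v + x) * (v + y) * (v + 0)) := by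
    rw [show (x * y / v + x) * (x * y / v + y) * (x * y / v + 0) =
        (x * y / v ^ 2) ^ 2 * ((v + x) * (v + y) * (v + 0)) by field_simp; ring,
      sqrt_mul (sq_nonneg _), sqrt_sq (by positivity)]
  have h_add : √(v + x * y / v + (x + y)) = √((v + x) * (v + y) * (v + 0)) / v := by
    rw [show v + x * y / v + (x + y) = (v + x) * (v + y) * (v + 0) / v ^ 2 by field_simp; ring,
      sqrt_div' _ (sq_nonneg v), sqrt_sq hv.le]
  simp only [rjIntegrand, rcIntegrand, h_inv, h_add]
  field_simp
  ring

theorem RC_eq_integral_Ioi_rcIntegrand {x y p l m : ℝ} (hp : 0 < p) (hlm : l * m = x * y) :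
    RC (p ^ 2 * (l + m + x + y)) (p * (p + l) * (p + m)) =
      (1 / 2 * ∫ w in Ioi (l + m), rcIntegrand (x + y) (p + x * y / p) w) / p := by
  rw [show p ^ 2 * (l + m + x + y) = p ^ 2 * ((x + y) + (l + m)) by ring,
    show p * (p + l) * (p + m) = p ^ 2 * ((p + x * y / p) + (l + m)) by
      field_simp; linear_combination hlm,
    RC_mul (by positivity), RC_add, sqrt_sq hp.le]

theorem RJ_add_add_RJ_add_of_le {x y p l m : ℝ} (hx : 0 < x) (hy : 0 < y) (hp : 0 < p)
    (hl : 0 < l) (hm : 0 < m) (hlm : l * m = x * y) (hml : m ≤ l) :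
    RJ (x + l) (y + l) l (p + l) + RJ (x + m) (y + m) m (p + m) =
      RJ x y 0 p - 3 * RC (p ^ 2 * (l + m + x + y)) (p * (p + l) * (p + m)) := by
  set G := rjIntegrand x y 0 p
  set K := rcIntegrand (x + y) (p + x * y / p)
  have hxy : 0 < x * y := mul_pos hx hy
  have hm_eq : x * y / l = m := by rw [← hlm]; field_simp
  have hG : IntegrableOn G (Ioi 0) := integrableOn_rjIntegrand hx hy le_rfl hp
  have hRJ_shift : ∀ a, RJ (x + a) (y + a) a (p + a) = 3 / 2 * ∫ t in Ioi a, G t := fun a => by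
    simpa using RJ_add x y 0 p a
  have hsplit : ∫ t in Ioi 0, G t = (∫ t in Ioo 0 m, G t) + ∫ t in Ioi m, G t := by
    rw [← Ioc_union_Ioi_eq_Ioi hm.le, setIntegral_union (Ioc_disjoint_Ioi le_rfl)
      measurableSet_Ioi (hG.mono_set Ioc_subset_Ioi_self) (hG.mono_set (Ioi_subset_Ioi hm.le)),
      integral_Ioc_eq_integral_Ioo]
  have hinv : ∫ t in Ioo 0 m, G t = ∫ v in Ioi l, x * y / v ^ 2 * G (x * y / v) :=
    hm_eq ▸ integral_Ioo_zero_eq_integral_Ioi_div hxy hl G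
  have hinv_int : IntegrableOn (fun v => x * y / v ^ 2 * G (x * y / v)) (Ioi l) :=
    (integrableOn_Ioo_zero_iff_integrableOn_Ioi_div hxy hl G).1
      (hm_eq ▸ hG.mono_set Ioo_subset_Ioi_self)
  have hdiff : (∫ v in Ioi l, x * y / v ^ 2 * G (x * y / v)) - ∫ v in Ioi l, G v =
      (∫ w in Ioi (l + m), K w) / p := by
    rw [← integral_sub hinv_int (hG.mono_set (Ioi_subset_Ioi hl.le)), ← hm_eq,
      integral_Ioi_add_const_div hl (by nlinarith), ← integral_div]
    exact setIntegral_congr_fun measurableSet_Ioi fun v hv =>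
      div_sq_mul_rjIntegrand_div_sub hx hy hp (hl.trans hv)
  rw [hRJ_shift, hRJ_shift, show RJ x y 0 p = 3 / 2 * ∫ t in Ioi 0, G t from rfl, hsplit, hinv,
    RC_eq_integral_Ioi_rcIntegrand hp hlm]
  linear_combination (-3 / 2) * hdiff

theorem stmt15 (x y p l m : ℝ) (hx : 0 < x) (hy : 0 < y) (hp : 0 < p)
    (hl : 0 < l) (hm : 0 < m) (hlm : l * m = x * y) :
    RJ (x + l) (y + l) l (p + l) + RJ (x + m) (y + m) m (p + m) =
      RJ x y 0 p - 3 * RC (p ^ 2 * (l + m + x + y)) (p * (p + l) * (p + m)) := by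
  rcases le_total m l with hml | hlm_le
  · exact RJ_add_add_RJ_add_of_le hx hy hp hl hm hlm hml
  · rw [add_comm (RJ _ _ _ _), show l + m = m + l from add_comm l m,
      show p * (p + l) * (p + m) = p * (p + m) * (p + l) by ring]
    exact RJ_add_add_RJ_add_of_le hx hy hp hm hl (by rw [mul_comm, hlm]) hlm_le
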